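/- arXiv:1802.07777 — 3 statements merged into one kernel-verified Lean document; each statement's English description precedes it below -/
import Mathlib

section
/- Let K and L be convex bodies in ℝ^n with the origin in their interiors. Then the polar body of their Minkowski average satisfies |((K+L)/2)°| ≤ (|K°| + |L°|)/2, with equality if and only if K = L. -/
open MeasureTheory Metric Filter Set ENNReal
open scoped Pointwise

noncomputable section

abbrev E (n : ℕ) := EuclideanSpace ℝ (Fin n)

abbrev Sph (n : ℕ) := ↥(Metric.sphere (0 : E n) 1)

/-- Convex body in `ℝⁿ` with the origin in its interior. -/
def IsBody {n : ℕ} (K : Set (E n)) : Prop :=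
  IsCompact K ∧ Convex ℝ K ∧ 0 ∈ interior K

/-- Support function of a set. -/
def supportFn {n : ℕ} (K : Set (E n)) (u : E n) : ℝ :=
  sSup ((fun x => (inner ℝ x u : ℝ)) '' K)

/-- Polar body. -/
def polarBody {n : ℕ} (K : Set (E n)) : Set (E n) :=
  {y | ∀ x ∈ K, (inner ℝ x y : ℝ) ≤ 1}

/-- Radial function. -/
def radialFn {n : ℕ} (K : Set (E n)) (u : E n) : ℝ :=
  sSup {r : ℝ | 0 ≤ r ∧ r • u ∈ K}

/-- Volume of the unit ball in `ℝⁿ`. -/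
def unitBallVol (n : ℕ) : ℝ≥0∞ := volume (Metric.closedBall (0 : E n) 1)

/-!
The support function `h_K` is continuous, nonnegative and positively homogeneous, and
`K° = {h_K ≤ 1}`. For such an `h`, Tonelli applied to `e^{-h(y)} = ∫_{s ≥ h(y)} e^{-s} ds`, together
with `|{h ≤ s}| = sⁿ |{h ≤ 1}|`, gives `∫ e^{-h_K} = n! |K°|`. Since `h_{(K+L)/2} = (h_K + h_L)/2`,
the inequality is the convexity of `t ↦ e^{-t}` integrated over `ℝⁿ`. In the equality case the
continuous integrands agree everywhere, so strict convexity gives `h_K = h_L`, and a compact convex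
set is determined by its support function (Hahn–Banach).
-/

namespace PolarVolume

open Real Module
open scoped Nat

section SupportFunction

variable {n : ℕ} {K L : Set (E n)}

lemma bddAbove_inner_image (hK : IsCompact K) (u : E n) :
    BddAbove ((fun x => (inner ℝ x u : ℝ)) '' K) :=
  (hK.image (continuous_id.inner continuous_const)).bddAbove

lemma inner_le_supportFn (hK : IsCompact K) {x : E n} (hx : x ∈ K) (u : E n) :
    inner ℝ x u ≤ supportFn K u :=
  le_csSup (bddAbove_inner_image hK u) (mem_image_of_mem _ hx)

lemma supportFn_le (hKne : K.Nonempty) {u : E n} {a : ℝ} (h : ∀ x ∈ K, inner ℝ x u ≤ a) :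
    supportFn K u ≤ a :=
  csSup_le (hKne.image _) (forall_mem_image.2 h)

lemma supportFn_nonneg (hK : IsCompact K) (h₀ : (0 : E n) ∈ K) (u : E n) :
    0 ≤ supportFn K u := by
  simpa using inner_le_supportFn hK h₀ u

lemma supportFn_smul_right {c : ℝ} (hc : 0 ≤ c) (u : E n) :
    supportFn K (c • u) = c * supportFn K u := by
  simp only [supportFn, real_inner_smul_right]
  rw [← smul_eq_mul, ← Real.sSup_smul_of_nonneg hc, ← Set.image_smul, Set.image_image]
  rfl

lemma supportFn_smul {c : ℝ} (hc : 0 ≤ c) (u : E n) :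
    supportFn (c • K) u = c * supportFn K u := by
  simp only [supportFn, ← Set.image_smul, Set.image_image, real_inner_smul_left]
  rw [← smul_eq_mul, ← Real.sSup_smul_of_nonneg hc, ← Set.image_smul, Set.image_image]
  rfl

lemma supportFn_add (hK : IsCompact K) (hL : IsCompact L) (hKne : K.Nonempty)
    (hLne : L.Nonempty) (u : E n) :
    supportFn (K + L) u = supportFn K u + supportFn L u := by
  have hℓ : (fun x : E n => inner ℝ x u) = innerSL ℝ u := funext fun x => real_inner_comm u x
  rw [supportFn, hℓ, Set.image_add, ← hℓ]
  exact csSup_add (hKne.image _) (bddAbove_inner_image hK u) (hLne.image _)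
    (bddAbove_inner_image hL u)

lemma lipschitzWith_supportFn {R : NNReal} (hK : IsCompact K) (hKne : K.Nonempty)
    (hR : K ⊆ closedBall 0 R) : LipschitzWith R (supportFn K) := by
  refine LipschitzWith.of_le_add_mul R fun u v => supportFn_le hKne fun x hx => ?_
  have hxR : ‖x‖ ≤ R := mem_closedBall_zero_iff.1 (hR hx)
  calc inner ℝ x u = inner ℝ x v + inner ℝ x (u - v) := by rw [← inner_add_right, add_sub_cancel]
    _ ≤ supportFn K v + ‖x‖ * ‖u - v‖ :=
      add_le_add (inner_le_supportFn hK hx v) (real_inner_le_norm x (u - v))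
    _ ≤ supportFn K v + R * dist u v := by
      rw [dist_eq_norm]; gcongr

lemma continuous_supportFn (hK : IsCompact K) (hKne : K.Nonempty) : Continuous (supportFn K) := by
  obtain ⟨R, hR⟩ := hK.isBounded.subset_closedBall 0
  exact (lipschitzWith_supportFn hK hKne (R := R.toNNReal)
    (hR.trans (closedBall_subset_closedBall (Real.le_coe_toNNReal R)))).continuous

lemma polarBody_eq_setOf_supportFn_le (hK : IsCompact K) (hKne : K.Nonempty) :
    polarBody K = {u | supportFn K u ≤ 1} :=
  Set.ext fun _ => ⟨supportFn_le hKne, fun h _ hx => (inner_le_supportFn hK hx _).trans h⟩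

lemma subset_of_supportFn_le (hK : IsCompact K) (hL : IsCompact L) (hLc : Convex ℝ L)
    (hLne : L.Nonempty) (h : ∀ u, supportFn K u ≤ supportFn L u) : K ⊆ L := by
  intro x hx
  by_contra hxL
  obtain ⟨f, a, hfL, hfx⟩ := geometric_hahn_banach_closed_point hLc hL.isClosed hxL
  set u := (InnerProductSpace.toDual ℝ (E n)).symm f
  have hu : ∀ z, inner ℝ z u = f z := fun z => by
    rw [real_inner_comm, InnerProductSpace.toDual_symm_apply]
  have hLu : supportFn L u ≤ a := supportFn_le hLne fun z hz => (hu z ▸ hfL z hz).le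
  have hKu := inner_le_supportFn hK hx u
  linarith [hu x, h u]

lemma eq_of_supportFn_eq (hK : IsCompact K) (hL : IsCompact L) (hKc : Convex ℝ K)
    (hLc : Convex ℝ L) (hKne : K.Nonempty) (hLne : L.Nonempty) (h : supportFn K = supportFn L) :
    K = L :=
  (subset_of_supportFn_le hK hL hLc hLne fun u => (congrFun h u).le).antisymm
    (subset_of_supportFn_le hL hK hKc hKne fun u => (congrFun h u).ge)

lemma polarBody_subset_closedBall {r : ℝ} (hr : 0 < r) (hK : closedBall 0 r ⊆ K) :
    polarBody K ⊆ closedBall 0 r⁻¹ := by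
  intro y hy
  rw [mem_closedBall_zero_iff, ← one_div, le_div_iff₀ hr]
  rcases eq_or_ne y 0 with rfl | hy₀
  · simp
  have hy' : 0 < ‖y‖ := norm_pos_iff.2 hy₀
  have hx : (r / ‖y‖) • y ∈ K := hK (by
    rw [mem_closedBall_zero_iff, norm_smul, Real.norm_of_nonneg (by positivity),
      div_mul_cancel₀ _ hy'.ne'])
  calc ‖y‖ * r = inner ℝ ((r / ‖y‖) • y) y := by
        rw [real_inner_smul_left, real_inner_self_eq_norm_sq]; field_simp
    _ ≤ 1 := hy _ hx

lemma _root_.IsBody.volume_polarBody_lt_top (hK : IsBody K) : volume (polarBody K) < ⊤ := by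
  obtain ⟨r, hr, hrK⟩ :=
    nhds_basis_closedBall.mem_iff.1 (mem_interior_iff_mem_nhds.1 hK.2.2)
  exact (measure_mono (polarBody_subset_closedBall hr hrK)).trans_lt measure_closedBall_lt_top

end SupportFunction

section Convexity

lemma exp_neg_midpoint_lt {a b : ℝ} (hab : a ≠ b) :
    exp (-(2⁻¹ * (a + b))) < (exp (-a) + exp (-b)) / 2 := by
  have := strictConvexOn_exp.2 (Set.mem_univ (-a)) (Set.mem_univ (-b)) (neg_injective.ne hab)
    (by norm_num : (0 : ℝ) < 2⁻¹) (by norm_num : (0 : ℝ) < 2⁻¹) (by norm_num)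
  simp only [smul_eq_mul] at this
  rw [show -(2⁻¹ * (a + b)) = 2⁻¹ * -a + 2⁻¹ * -b by ring]
  linarith

lemma exp_neg_midpoint_le (a b : ℝ) : exp (-(2⁻¹ * (a + b))) ≤ (exp (-a) + exp (-b)) / 2 := by
  rcases eq_or_ne a b with rfl | hab
  · exact le_of_eq (by ring_nf)
  · exact (exp_neg_midpoint_lt hab).le

lemma ofReal_exp_neg_add_div_two (a b : ℝ) :
    (ENNReal.ofReal (exp (-a)) + ENNReal.ofReal (exp (-b))) / 2 =
      ENNReal.ofReal ((exp (-a) + exp (-b)) / 2) := by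
  rw [← ENNReal.ofReal_add (exp_pos _).le (exp_pos _).le,
    ENNReal.ofReal_div_of_pos two_pos, ENNReal.ofReal_ofNat]

lemma ofReal_exp_neg_midpoint_le (a b : ℝ) :
    ENNReal.ofReal (exp (-(2⁻¹ * (a + b)))) ≤
      (ENNReal.ofReal (exp (-a)) + ENNReal.ofReal (exp (-b))) / 2 := by
  rw [ofReal_exp_neg_add_div_two]
  exact ENNReal.ofReal_le_ofReal (exp_neg_midpoint_le a b)

lemma ofReal_exp_neg_midpoint_lt {a b : ℝ} (hab : a ≠ b) :
    ENNReal.ofReal (exp (-(2⁻¹ * (a + b)))) <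
      (ENNReal.ofReal (exp (-a)) + ENNReal.ofReal (exp (-b))) / 2 := by
  rw [ofReal_exp_neg_add_div_two]
  exact ENNReal.ofReal_lt_ofReal_iff'.2 ⟨exp_neg_midpoint_lt hab, by positivity⟩

variable {X : Type*} [MeasurableSpace X] (μ : Measure X) {f g : X → ℝ}

lemma lintegral_exp_neg_midpoint_le (hf : Measurable f) :
    ∫⁻ x, ENNReal.ofReal (exp (-(2⁻¹ * (f x + g x)))) ∂μ ≤
      (∫⁻ x, ENNReal.ofReal (exp (-f x)) ∂μ + ∫⁻ x, ENNReal.ofReal (exp (-g x)) ∂μ) / 2 := by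
  rw [← lintegral_add_left (by fun_prop), div_eq_mul_inv, ← lintegral_mul_const' _ _ (by simp)]
  exact lintegral_mono fun x => ofReal_exp_neg_midpoint_le (f x) (g x)

lemma eq_of_lintegral_exp_neg_midpoint_eq [TopologicalSpace X] [OpensMeasurableSpace X]
    [μ.IsOpenPosMeasure] (hf : Continuous f) (hg : Continuous g)
    (hfin : ∫⁻ x, ENNReal.ofReal (exp (-(2⁻¹ * (f x + g x)))) ∂μ ≠ ⊤)
    (heq : ∫⁻ x, ENNReal.ofReal (exp (-(2⁻¹ * (f x + g x)))) ∂μ =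
      (∫⁻ x, ENNReal.ofReal (exp (-f x)) ∂μ + ∫⁻ x, ENNReal.ofReal (exp (-g x)) ∂μ) / 2) :
    f = g := by
  rw [← lintegral_add_left (by fun_prop), div_eq_mul_inv, ← lintegral_mul_const' _ _ (by simp)]
    at heq
  have hae := ae_eq_of_ae_le_of_lintegral_le
    (ae_of_all μ fun x => ofReal_exp_neg_midpoint_le (f x) (g x)) hfin (by fun_prop) heq.ge
  refine (hf.ae_eq_iff_eq μ hg).1 (hae.mono fun x hx => ?_)
  by_contra hne
  exact (ofReal_exp_neg_midpoint_lt hne).ne hx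

end Convexity

section HomogeneousIntegral

lemma lintegral_Ici_exp_neg (a : ℝ) :
    ∫⁻ s in Ici a, ENNReal.ofReal (exp (-s)) = ENNReal.ofReal (exp (-a)) := by
  rw [← ofReal_integral_eq_lintegral_ofReal, integral_Ici_eq_integral_Ioi, integral_exp_neg_Ioi]
  · exact (integrableOn_Ici_iff_integrableOn_Ioi (f := fun s => exp (-s))).2
      (integrableOn_exp_neg_Ioi a)
  · exact ae_of_all _ fun s => (exp_pos _).le

lemma lintegral_Ioi_exp_neg_mul_pow (k : ℕ) :
    ∫⁻ s in Ioi 0, ENNReal.ofReal (exp (-s) * s ^ k) = k ! := by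
  have hΓ := Real.GammaIntegral_convergent (s := k + 1) (by positivity)
  have hk := Real.Gamma_eq_integral (s := k + 1) (by positivity)
  simp only [add_sub_cancel_right, Real.rpow_natCast] at hΓ hk
  rw [← ofReal_integral_eq_lintegral_ofReal hΓ, ← hk, Real.Gamma_nat_eq_factorial,
    ENNReal.ofReal_natCast]
  filter_upwards [ae_restrict_mem measurableSet_Ioi] with s hs
  exact mul_nonneg (exp_pos _).le (pow_nonneg (le_of_lt hs) k)

variable {F : Type*} [NormedAddCommGroup F] [NormedSpace ℝ F] [FiniteDimensional ℝ F]
  [MeasurableSpace F] [BorelSpace F] (μ : Measure F) [μ.IsAddHaarMeasure] {h : F → ℝ}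

lemma measure_setOf_le_of_homogeneous (hh : ∀ s > 0, ∀ y, h (s • y) = s * h y) {s : ℝ}
    (hs : 0 < s) : μ {y | h y ≤ s} = ENNReal.ofReal (s ^ finrank ℝ F) * μ {y | h y ≤ 1} := by
  have : {y | h y ≤ s} = s • {y | h y ≤ 1} := by
    ext y
    rw [Set.mem_smul_set_iff_inv_smul_mem₀ hs.ne', Set.mem_ofPred, Set.mem_ofPred,
      hh _ (inv_pos.2 hs), inv_mul_le_iff₀ hs, mul_one]
  rw [this, Measure.addHaar_smul_of_nonneg μ hs.le]

theorem lintegral_exp_neg_of_homogeneous (hm : Measurable h) (h₀ : ∀ y, 0 ≤ h y)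
    (hh : ∀ s > 0, ∀ y, h (s • y) = s * h y) :
    ∫⁻ y, ENNReal.ofReal (exp (-h y)) ∂μ = (finrank ℝ F)! * μ {y | h y ≤ 1} := by
  set g : ℝ → ℝ≥0∞ := fun s => ENNReal.ofReal (exp (-s))
  have hg : Measurable g := by fun_prop
  calc ∫⁻ y, g (h y) ∂μ = ∫⁻ y, (∫⁻ s in Ici 0, (Ici (h y)).indicator g s) ∂μ := by
        congr with y
        rw [lintegral_indicator measurableSet_Ici, Measure.restrict_restrict measurableSet_Ici,
          Ici_inter_Ici, sup_eq_left.2 (h₀ y), lintegral_Ici_exp_neg]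
    _ = ∫⁻ s in Ici 0, ∫⁻ y, (Ici (h y)).indicator g s ∂μ :=
        lintegral_lintegral_swap ((hg.comp measurable_snd).indicator
          (measurableSet_le (hm.comp measurable_fst) measurable_snd)).aemeasurable
    _ = ∫⁻ s in Ioi 0, g s * μ {y | h y ≤ s} := by
        rw [← setLIntegral_congr Ioi_ae_eq_Ici]
        congr with s
        rw [← lintegral_indicator_const (measurableSet_le hm measurable_const)]
        rfl
    _ = ∫⁻ s in Ioi 0, ENNReal.ofReal (exp (-s) * s ^ finrank ℝ F) * μ {y | h y ≤ 1} := by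
        refine setLIntegral_congr_fun measurableSet_Ioi fun s hs => ?_
        rw [measure_setOf_le_of_homogeneous μ hh hs, ENNReal.ofReal_mul (exp_pos _).le, mul_assoc]
    _ = (finrank ℝ F)! * μ {y | h y ≤ 1} := by
        rw [lintegral_mul_const _ (by fun_prop), lintegral_Ioi_exp_neg_mul_pow]

end HomogeneousIntegral

section Bodies

variable {n : ℕ} {K L : Set (E n)}

lemma lintegral_exp_neg_supportFn (hK : IsCompact K) (h₀ : (0 : E n) ∈ K) :
    ∫⁻ u, ENNReal.ofReal (exp (-supportFn K u)) = n ! * volume (polarBody K) := by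
  rw [lintegral_exp_neg_of_homogeneous volume (continuous_supportFn hK ⟨0, h₀⟩).measurable
    (supportFn_nonneg hK h₀) fun s hs => supportFn_smul_right hs.le, finrank_euclideanSpace_fin,
    polarBody_eq_setOf_supportFn_le hK ⟨0, h₀⟩]

lemma supportFn_midpoint (hK : IsCompact K) (hL : IsCompact L) (hKne : K.Nonempty)
    (hLne : L.Nonempty) (u : E n) :
    supportFn ((2⁻¹ : ℝ) • (K + L)) u = 2⁻¹ * (supportFn K u + supportFn L u) := by
  rw [supportFn_smul (by norm_num), supportFn_add hK hL hKne hLne]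

lemma _root_.Convex.inv_two_smul_add_self (hK : Convex ℝ K) : (2⁻¹ : ℝ) • (K + K) = K := by
  have := hK.add_smul zero_le_one zero_le_one
  rw [one_smul, one_add_one_eq_two] at this
  rw [← this, smul_smul, inv_mul_cancel₀ two_ne_zero, one_smul]

lemma _root_.IsBody.zero_mem (hK : IsBody K) : (0 : E n) ∈ K :=
  interior_subset hK.2.2

lemma lintegral_exp_neg_supportFn_midpoint (hK : IsBody K) (hL : IsBody L) :
    ∫⁻ u, ENNReal.ofReal (exp (-(2⁻¹ * (supportFn K u + supportFn L u)))) =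
      n ! * volume (polarBody ((2⁻¹ : ℝ) • (K + L))) := by
  have h₀ : (0 : E n) ∈ (2⁻¹ : ℝ) • (K + L) :=
    ⟨0, ⟨0, hK.zero_mem, 0, hL.zero_mem, add_zero 0⟩, smul_zero _⟩
  rw [← lintegral_exp_neg_supportFn ((hK.1.add hL.1).smul _) h₀]
  simp only [supportFn_midpoint hK.1 hL.1 ⟨0, hK.zero_mem⟩ ⟨0, hL.zero_mem⟩]

end Bodies

end PolarVolume

open PolarVolume

theorem polar_volume_average {n : ℕ}
    (K L : Set (E n)) (hK : IsBody K) (hL : IsBody L) :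
    volume (polarBody ((2⁻¹ : ℝ) • (K + L))) ≤
        (volume (polarBody K) + volume (polarBody L)) / 2 ∧
      (volume (polarBody ((2⁻¹ : ℝ) • (K + L))) =
          (volume (polarBody K) + volume (polarBody L)) / 2 ↔ K = L) := by
  have hIM := lintegral_exp_neg_supportFn_midpoint hK hL
  have hIK := lintegral_exp_neg_supportFn hK.1 hK.zero_mem
  have hIL := lintegral_exp_neg_supportFn hL.1 hL.zero_mem
  have hcont := continuous_supportFn hK.1 ⟨0, hK.zero_mem⟩
  have hn : (n.factorial : ℝ≥0∞) ≠ 0 := by exact_mod_cast n.factorial_ne_zero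
  have hle : volume (polarBody ((2⁻¹ : ℝ) • (K + L))) ≤
      (volume (polarBody K) + volume (polarBody L)) / 2 := by
    rw [← ENNReal.mul_le_mul_iff_right hn (ENNReal.natCast_ne_top _), ← mul_div_assoc, mul_add,
      ← hIM, ← hIK, ← hIL]
    exact lintegral_exp_neg_midpoint_le volume hcont.measurable
  refine ⟨hle, fun heq => ?_, ?_⟩
  · refine eq_of_supportFn_eq hK.1 hL.1 hK.2.1 hL.2.1 ⟨0, hK.zero_mem⟩ ⟨0, hL.zero_mem⟩
      (eq_of_lintegral_exp_neg_midpoint_eq volume hcont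
        (continuous_supportFn hL.1 ⟨0, hL.zero_mem⟩) ?_ ?_)
    · rw [hIM]
      refine ENNReal.mul_ne_top (ENNReal.natCast_ne_top _) (hle.trans_lt ?_).ne
      exact ENNReal.div_lt_top (ENNReal.add_lt_top.2
        ⟨hK.volume_polarBody_lt_top, hL.volume_polarBody_lt_top⟩).ne two_ne_zero
    · rw [hIM, hIK, hIL, heq, ← mul_add, mul_div_assoc]
  · rintro rfl
    rw [hK.2.1.inv_two_smul_add_self, ENNReal.add_div, ENNReal.add_halves]
end
end

section
/- Let K and L be convex bodies in ℝ^n with the origin in their interiors such that |K°| = |L°| = ω_n (the volume of the unit ball). If M = (K+L)/2 and vrad(M°) = (|M°|/ω_n)^{1/n} = 1, then K = L. -/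
open MeasureTheory Metric Filter Set ENNReal
open scoped Pointwise

noncomputable section

/-!
In polar coordinates `|K°| = ∫_{S^{n-1}} h_K(u)^{-n} / n du`, and the support function of
`M = (K + L)/2` is `(h_K + h_L)/2`. As `t ↦ t^{-n}` is strictly convex on `(0, ∞)`, this gives
`2|M°| ≤ |K°| + |L°|`, with equality only if `h_K = h_L` almost everywhere on the sphere, hence
everywhere by continuity; a convex body is determined by its support function. The hypotheses
force equality: `2|M°| = 2ω_n = |K°| + |L°|`.
-/

section SupportFunction

variable {n : ℕ} {K L : Set (E n)}

lemma le_supportFn (hK : IsCompact K) {x : E n} (hx : x ∈ K) (u : E n) :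
    inner ℝ x u ≤ supportFn K u :=
  le_csSup (hK.image (continuous_id.inner continuous_const)).bddAbove (mem_image_of_mem _ hx)

lemma supportFn_le (hne : K.Nonempty) {u : E n} {c : ℝ} (h : ∀ x ∈ K, inner ℝ x u ≤ c) :
    supportFn K u ≤ c :=
  csSup_le (hne.image _) (forall_mem_image.2 h)

lemma supportFn_smul_right (K : Set (E n)) {r : ℝ} (hr : 0 ≤ r) (u : E n) :
    supportFn K (r • u) = r * supportFn K u := by
  have : (fun x => inner ℝ x (r • u)) '' K = r • (fun x => inner ℝ x u) '' K := by
    simp only [← image_smul, image_image, real_inner_smul_right, smul_eq_mul]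
  rw [supportFn, this, Real.sSup_smul_of_nonneg hr, smul_eq_mul, supportFn]

lemma supportFn_zero (K : Set (E n)) : supportFn K 0 = 0 := by
  simpa using supportFn_smul_right K le_rfl 0

lemma supportFn_smul_left (K : Set (E n)) (c : ℝ) (u : E n) :
    supportFn (c • K) u = supportFn K (c • u) := by
  simp only [supportFn, ← image_smul, image_image, real_inner_smul_left, real_inner_smul_right]

lemma supportFn_add (hK : IsCompact K) (hKne : K.Nonempty) (hL : IsCompact L) (hLne : L.Nonempty)
    (u : E n) : supportFn (K + L) u = supportFn K u + supportFn L u := by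
  have hcont : Continuous fun x : E n => inner ℝ x u := continuous_id.inner continuous_const
  rw [supportFn, ← image2_add, image_image2_distrib fun x y => inner_add_left x y u, image2_add,
    csSup_add (hKne.image _) (hK.image hcont).bddAbove (hLne.image _) (hL.image hcont).bddAbove]
  rfl

lemma continuous_supportFn (hK : IsCompact K) (hne : K.Nonempty) : Continuous (supportFn K) := by
  obtain ⟨R, hR⟩ := hK.isBounded.exists_norm_le
  refine (LipschitzWith.of_le_add_mul' R fun u v => supportFn_le hne fun x hx => ?_).continuous
  calc inner ℝ x u = inner ℝ x v + inner ℝ x (u - v) := by rw [← inner_add_right, add_sub_cancel]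
    _ ≤ supportFn K v + R * dist u v := by
      rw [dist_eq_norm]
      gcongr
      · exact le_supportFn hK hx v
      · exact (real_inner_le_norm x _).trans
          (mul_le_mul_of_nonneg_right (hR x hx) (norm_nonneg _))

lemma polarBody_eq_setOf_supportFn_le (hK : IsCompact K) (hne : K.Nonempty) :
    polarBody K = {y | supportFn K y ≤ 1} :=
  Set.ext fun _ => ⟨supportFn_le hne, fun hy _ hx => (le_supportFn hK hx _).trans hy⟩

lemma subset_of_supportFn_le (hK : IsCompact K) (hLc : IsClosed L) (hLconv : Convex ℝ L)
    (hLne : L.Nonempty) (h : ∀ u, supportFn K u ≤ supportFn L u) : K ⊆ L := by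
  intro x hx
  by_contra hxL
  obtain ⟨f, c, hfL, hfx⟩ := geometric_hahn_banach_closed_point hLconv hLc hxL
  set w := (InnerProductSpace.toDual ℝ (E n)).symm f
  have hw : ∀ y, inner ℝ y w = f y := fun y => by
    rw [real_inner_comm, InnerProductSpace.toDual_symm_apply]
  have hLw : supportFn L w ≤ c := supportFn_le hLne fun y hy => (hw y).trans_le (hfL y hy).le
  have hKw : c < supportFn K w := hfx.trans_le ((hw x).symm.trans_le (le_supportFn hK hx w))
  exact (h w).not_gt (hLw.trans_lt hKw)

lemma supportFn_eq_of_eqOn_sphere (h : ∀ u ∈ sphere (0 : E n) 1, supportFn K u = supportFn L u) :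
    supportFn K = supportFn L := by
  funext u
  rcases eq_or_ne u 0 with rfl | hu
  · rw [supportFn_zero, supportFn_zero]
  · have hunit : ‖u‖⁻¹ • u ∈ sphere (0 : E n) 1 := by simp [norm_smul, hu]
    rw [← smul_inv_smul₀ (norm_ne_zero_iff.2 hu) u, supportFn_smul_right K (norm_nonneg u),
      supportFn_smul_right L (norm_nonneg u), h _ hunit]

end SupportFunction

open scoped Topology

namespace IsBody

variable {n : ℕ} {K L : Set (E n)}

lemma nonempty (hK : IsBody K) : K.Nonempty :=
  ⟨0, interior_subset hK.2.2⟩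

lemma add (hK : IsBody K) (hL : IsBody L) : IsBody (K + L) :=
  ⟨hK.1.add hL.1, hK.2.1.add hL.2.1,
    subset_interior_add_left (by simpa using add_mem_add hK.2.2 (interior_subset hL.2.2))⟩

lemma smul (hK : IsBody K) {c : ℝ} (hc : c ≠ 0) : IsBody (c • K) :=
  ⟨hK.1.smul c, hK.2.1.smul c, by simpa [interior_smul₀ hc] using smul_mem_smul_set (a := c) hK.2.2⟩

lemma supportFn_pos (hK : IsBody K) {u : E n} (hu : u ≠ 0) : 0 < supportFn K u := by
  have hseg : ∀ᶠ t in 𝓝[>] (0 : ℝ), t • u ∈ K := by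
    refine nhdsWithin_le_nhds (tendsto_id.smul_const u ?_)
    simpa using mem_interior_iff_mem_nhds.1 hK.2.2
  obtain ⟨t, htK, ht⟩ := (hseg.and self_mem_nhdsWithin).exists
  calc 0 < t * ‖u‖ ^ 2 := mul_pos ht (by positivity)
    _ = inner ℝ (t • u) u := by rw [real_inner_smul_left, real_inner_self_eq_norm_sq]
    _ ≤ supportFn K u := le_supportFn hK.1 htK u

lemma supportFn_sphere_pos (hK : IsBody K) (u : Sph n) : 0 < supportFn K u :=
  hK.supportFn_pos (ne_zero_of_mem_unit_sphere u)

lemma continuous_supportFn_sphere (hK : IsBody K) : Continuous fun u : Sph n => supportFn K u :=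
  (continuous_supportFn hK.1 hK.nonempty).comp continuous_subtype_val

lemma smul_mem_polarBody_iff (hK : IsBody K) {u : E n} (hu : u ≠ 0) {r : ℝ} (hr : 0 < r) :
    r • u ∈ polarBody K ↔ r ≤ (supportFn K u)⁻¹ := by
  rw [polarBody_eq_setOf_supportFn_le hK.1 hK.nonempty, mem_ofPred_eq,
    supportFn_smul_right K hr.le, ← one_div, le_div_iff₀ (hK.supportFn_pos hu)]

end IsBody

namespace MeasureTheory.Measure

open intervalIntegral in
lemma volumeIoiPow_setOf_le (m : ℕ) {c : ℝ} (hc : 0 < c) :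
    volumeIoiPow m {r | r.1 ≤ c} = ENNReal.ofReal (c ^ (m + 1) / (m + 1)) := by
  have hset : {r : Ioi (0 : ℝ) | r.1 ≤ c} = Iic ⟨c, hc⟩ := rfl
  rw [hset, volumeIoiPow, withDensity_apply _ measurableSet_Iic,
    setLIntegral_subtype measurableSet_Ioi _ fun a : ℝ ↦ .ofReal (a ^ m),
    image_subtype_val_Ioi_Iic,
    ← ofReal_integral_eq_lintegral_ofReal (intervalIntegrable_pow _).1, ← integral_of_le hc.le]
  · simp
  · filter_upwards [ae_restrict_mem measurableSet_Ioc] with y hy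
    exact pow_nonneg hy.1.le _

variable {F : Type*} [NormedAddCommGroup F] [NormedSpace ℝ F] [FiniteDimensional ℝ F]
  [MeasurableSpace F] [BorelSpace F] [Nontrivial F]

theorem measure_eq_lintegral_toSphere_of_radial (μ : Measure F) [μ.IsAddHaarMeasure]
    {S : Set F} {ρ : sphere (0 : F) 1 → ℝ} (hρ : Measurable ρ) (hρ_pos : ∀ u, 0 < ρ u)
    (hS : ∀ (u : sphere (0 : F) 1) {r : ℝ}, 0 < r → (r • (u : F) ∈ S ↔ r ≤ ρ u)) :
    μ S = ∫⁻ u, ENNReal.ofReal (ρ u ^ Module.finrank ℝ F / Module.finrank ℝ F) ∂μ.toSphere := by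
  set A : Set (sphere (0 : F) 1 × Ioi (0 : ℝ)) := {p | p.2.1 ≤ ρ p.1}
  have hA : MeasurableSet A := measurableSet_le (measurable_subtype_coe.comp measurable_snd)
    (hρ.comp measurable_fst)
  have hpre : homeomorphUnitSphereProd F ⁻¹' A = ((↑) : ({0}ᶜ : Set F) → F) ⁻¹' S := by
    ext x
    obtain ⟨p, rfl⟩ := (homeomorphUnitSphereProd F).symm.surjective x
    simp only [mem_preimage, Homeomorph.apply_symm_apply, homeomorphUnitSphereProd_symm_apply_coe]
    exact (hS p.1 p.2.2).symm
  have hd : Module.finrank ℝ F - 1 + 1 = Module.finrank ℝ F := Nat.sub_add_cancel Module.finrank_pos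
  calc μ S = μ (S \ {0}) := (measure_sdiff_null (measure_singleton 0)).symm
    _ = μ.comap (↑) (((↑) : ({0}ᶜ : Set F) → F) ⁻¹' S) := by
      rw [comap_subtype_coe_apply (measurableSet_singleton 0).compl,
        image_preimage_eq_inter_range, Subtype.range_coe, sdiff_eq]
    _ = (μ.toSphere.prod (volumeIoiPow (Module.finrank ℝ F - 1))) A := by
      rw [← hpre]
      exact (μ.measurePreserving_homeomorphUnitSphereProd).measure_preimage hA.nullMeasurableSet
    _ = ∫⁻ u, ENNReal.ofReal (ρ u ^ Module.finrank ℝ F / Module.finrank ℝ F) ∂μ.toSphere := by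
      rw [prod_apply hA]
      refine lintegral_congr fun u => ?_
      rw [show Prod.mk u ⁻¹' A = {r | r.1 ≤ ρ u} from rfl, volumeIoiPow_setOf_le _ (hρ_pos u)]
      norm_cast
      rw [hd]

end MeasureTheory.Measure

section Convexity

variable {s : Set ℝ} {f : ℝ → ℝ} {a b : ℝ}

lemma ConvexOn.two_mul_ofReal_midpoint_le (hf : ConvexOn ℝ s f) (hf₀ : ∀ x ∈ s, 0 ≤ f x)
    (ha : a ∈ s) (hb : b ∈ s) :
    2 * ENNReal.ofReal (f ((a + b) / 2)) ≤ ENNReal.ofReal (f a) + ENNReal.ofReal (f b) := by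
  have h := hf.2 ha hb one_half_pos.le one_half_pos.le (add_halves (1 : ℝ))
  rw [← ENNReal.ofReal_ofNat 2, ← ENNReal.ofReal_mul zero_le_two,
    ← ENNReal.ofReal_add (hf₀ a ha) (hf₀ b hb)]
  simp only [smul_eq_mul, show 1 / 2 * a + 1 / 2 * b = (a + b) / 2 by ring] at h
  exact ENNReal.ofReal_le_ofReal (by linarith)

lemma StrictConvexOn.two_mul_ofReal_midpoint_lt (hf : StrictConvexOn ℝ s f)
    (hf₀ : ∀ x ∈ s, 0 ≤ f x) (ha : a ∈ s) (hb : b ∈ s) (hab : a ≠ b) :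
    2 * ENNReal.ofReal (f ((a + b) / 2)) < ENNReal.ofReal (f a) + ENNReal.ofReal (f b) := by
  have h := hf.2 ha hb hab one_half_pos one_half_pos (add_halves (1 : ℝ))
  have hmid : (a + b) / 2 ∈ s := by
    convert hf.1 ha hb one_half_pos.le one_half_pos.le (add_halves (1 : ℝ)) using 1
    simp only [smul_eq_mul]; ring
  simp only [smul_eq_mul, show 1 / 2 * a + 1 / 2 * b = (a + b) / 2 by ring] at h
  rw [← ENNReal.ofReal_ofNat 2, ← ENNReal.ofReal_mul zero_le_two,
    ← ENNReal.ofReal_add (hf₀ a ha) (hf₀ b hb),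
    ENNReal.ofReal_lt_ofReal_iff (by linarith [hf₀ _ hmid])]
  linarith

end Convexity

lemma strictConvexOn_inv_pow_div_natCast {n : ℕ} (hn : n ≠ 0) :
    StrictConvexOn ℝ (Ioi 0) fun x : ℝ => x⁻¹ ^ n / n := by
  have h := strictConvexOn_zpow (m := -n) (by simpa using hn) (by omega)
  simp only [zpow_neg, zpow_natCast, ← inv_pow] at h
  refine ⟨convex_Ioi 0, fun x hx y hy hxy a b ha hb hab => ?_⟩
  calc ((a • x + b • y)⁻¹ ^ n) / n < (a • (x⁻¹ ^ n) + b • (y⁻¹ ^ n)) / n := by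
        gcongr; exact h.2 hx hy hxy ha hb hab
    _ = a • (x⁻¹ ^ n / n) + b • (y⁻¹ ^ n / n) := by simp only [smul_eq_mul]; ring

lemma ENNReal.eq_of_toReal_div_rpow_one_div_eq_one {a b : ℝ≥0∞} (hb : b ≠ ⊤) {p : ℝ}
    (hp : p ≠ 0) (h : (a.toReal / b.toReal) ^ (1 / p) = 1) : a = b := by
  rw [one_div, Real.rpow_inv_eq (by positivity) zero_le_one hp, Real.one_rpow] at h
  have hb₀ : b.toReal ≠ 0 := fun h₀ => by simp [h₀] at h
  have hab : a.toReal = b.toReal := (div_eq_one_iff_eq hb₀).1 h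
  exact (ENNReal.toReal_eq_toReal_iff' (fun ha => hb₀ (by simp [← hab, ha])) hb).1 hab

namespace IsBody

variable {n : ℕ} {K L : Set (E n)}

lemma volume_polarBody [Nontrivial (E n)] (hK : IsBody K) :
    volume (polarBody K) =
      ∫⁻ u : Sph n, ENNReal.ofReal ((supportFn K u)⁻¹ ^ n / n)
        ∂(volume : Measure (E n)).toSphere := by
  have hρ : Continuous fun u : Sph n => (supportFn K u)⁻¹ :=
    hK.continuous_supportFn_sphere.inv₀ fun u => (hK.supportFn_sphere_pos u).ne'
  simpa only [finrank_euclideanSpace_fin] using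
    Measure.measure_eq_lintegral_toSphere_of_radial volume hρ.measurable
      (fun u => inv_pos.2 (hK.supportFn_sphere_pos u))
      (fun u _ hr => hK.smul_mem_polarBody_iff (ne_zero_of_mem_unit_sphere u) hr)

lemma supportFn_midpoint (hK : IsBody K) (hL : IsBody L) (u : E n) :
    supportFn ((2⁻¹ : ℝ) • (K + L)) u = (supportFn K u + supportFn L u) / 2 := by
  rw [supportFn_smul_left, supportFn_smul_right _ (by norm_num),
    supportFn_add hK.1 hK.nonempty hL.1 hL.nonempty]
  ring

lemma eq_of_supportFn_eq (hK : IsBody K) (hL : IsBody L) (h : supportFn K = supportFn L) :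
    K = L :=
  (subset_of_supportFn_le hK.1 hL.1.isClosed hL.2.1 hL.nonempty fun u => (congrFun h u).le).antisymm
    (subset_of_supportFn_le hL.1 hK.1.isClosed hK.2.1 hK.nonempty fun u => (congrFun h u).ge)

lemma eq_of_ae_eq_supportFn_sphere (hK : IsBody K) (hL : IsBody L)
    (h : ∀ᵐ u : Sph n ∂(volume : Measure (E n)).toSphere, supportFn K u = supportFn L u) :
    K = L := by
  have hKL := (hK.continuous_supportFn_sphere.ae_eq_iff_eq _ hL.continuous_supportFn_sphere).1 h
  exact eq_of_supportFn_eq hK hL (supportFn_eq_of_eqOn_sphere fun u hu => congrFun hKL ⟨u, hu⟩)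

theorem eq_of_two_mul_volume_polarBody_midpoint_eq (hn : n ≠ 0) (hK : IsBody K) (hL : IsBody L)
    (hfin : volume (polarBody ((2⁻¹ : ℝ) • (K + L))) ≠ ⊤)
    (h : 2 * volume (polarBody ((2⁻¹ : ℝ) • (K + L))) =
      volume (polarBody K) + volume (polarBody L)) : K = L := by
  have : Nontrivial (E n) :=
    Module.nontrivial_of_finrank_pos (R := ℝ) (by rw [finrank_euclideanSpace_fin]; omega)
  set σ := (volume : Measure (E n)).toSphere
  set g : ℝ → ℝ≥0∞ := fun t => ENNReal.ofReal (t⁻¹ ^ n / n)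
  have hf := strictConvexOn_inv_pow_div_natCast hn
  have hf₀ : ∀ t ∈ Ioi (0 : ℝ), 0 ≤ t⁻¹ ^ n / n := fun t ht => by have := ht.out; positivity
  have hKpos := hK.supportFn_sphere_pos
  have hLpos := hL.supportFn_sphere_pos
  have hg : Measurable g := ENNReal.measurable_ofReal.comp (by fun_prop)
  have hgK := hg.comp hK.continuous_supportFn_sphere.measurable
  have hgL := hg.comp hL.continuous_supportFn_sphere.measurable
  have hle : ∀ u : Sph n, 2 * g ((supportFn K u + supportFn L u) / 2) ≤
      g (supportFn K u) + g (supportFn L u) :=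
    fun u => hf.convexOn.two_mul_ofReal_midpoint_le hf₀ (hKpos u) (hLpos u)
  have hmid : ∫⁻ u, 2 * g ((supportFn K u + supportFn L u) / 2) ∂σ =
      2 * volume (polarBody ((2⁻¹ : ℝ) • (K + L))) := by
    rw [lintegral_const_mul' _ _ ENNReal.ofNat_ne_top,
      ((hK.add hL).smul (by norm_num)).volume_polarBody]
    simp_rw [hK.supportFn_midpoint hL]
    rfl
  have hsum : ∫⁻ u, g (supportFn K u) + g (supportFn L u) ∂σ =
      volume (polarBody K) + volume (polarBody L) := by
    rw [lintegral_add_left (f := fun u : Sph n => g (supportFn K u)) hgK, hK.volume_polarBody,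
      hL.volume_polarBody]
  have hae := ae_eq_of_ae_le_of_lintegral_le (ae_of_all _ hle)
    (hmid ▸ ENNReal.mul_ne_top ENNReal.ofNat_ne_top hfin) (hgK.add hgL).aemeasurable
    (by rw [hsum, hmid, h])
  refine eq_of_ae_eq_supportFn_sphere hK hL (hae.mono fun u hu => ?_)
  by_contra hne
  exact (hf.two_mul_ofReal_midpoint_lt hf₀ (hKpos u) (hLpos u) hne).ne hu

end IsBody

theorem vrad_average_eq_one_imp_eq_general {n : ℕ}
    (K L : Set (E n)) (hK : IsBody K) (hL : IsBody L)
    (hKvol : volume (polarBody K) = unitBallVol n)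
    (hLvol : volume (polarBody L) = unitBallVol n)
    (hvrad : ((volume (polarBody ((2⁻¹ : ℝ) • (K + L)))).toReal /
        (unitBallVol n).toReal) ^ ((1 : ℝ) / n) = 1) :
    K = L := by
  obtain rfl | hn := eq_or_ne n 0
  · rw [hK.nonempty.eq_univ, hL.nonempty.eq_univ]
  have hω : unitBallVol n ≠ ⊤ := measure_closedBall_lt_top.ne
  have hMvol := ENNReal.eq_of_toReal_div_rpow_one_div_eq_one hω (Nat.cast_ne_zero.2 hn) hvrad
  refine hK.eq_of_two_mul_volume_polarBody_midpoint_eq hn hL (hMvol ▸ hω) ?_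
  rw [hMvol, hKvol, hLvol, two_mul]

theorem vrad_average_eq_one_imp_eq {n : ℕ} (hn : 0 < n)
    (K L : Set (E n)) (hK : IsBody K) (hL : IsBody L)
    (hKvol : volume (polarBody K) = unitBallVol n)
    (hLvol : volume (polarBody L) = unitBallVol n)
    (hvrad : ((volume (polarBody ((2⁻¹ : ℝ) • (K + L)))).toReal /
        (unitBallVol n).toReal) ^ ((1 : ℝ) / n) = 1) :
    K = L :=
  vrad_average_eq_one_imp_eq_general K L hK hL hKvol hLvol hvrad
end
end

section
/- Let (K_i) be a uniformly bounded sequence of convex bodies in ℝ^n with the origin in their interiors such that |K_i°| = ω_n for all i. Then there exists a subsequence (K_{i_j}) and a convex body K with the origin in its interior such that K_{i_j} → K in the Hausdorff metric and |K°| = ω_n. -/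
open MeasureTheory Metric Filter Set ENNReal

noncomputable section

/-!
Since `K ⊆ R B`, the polar `K°` is a convex set containing `R⁻¹ B`. If `y ∈ K°`, the balls of
radius `1 / (2R)` centred at the points `k / (R ‖y‖) • y ∈ [0, y / 2]` lie in `K°` and are
disjoint, so `|K°| ≤ ω_n` bounds their number `≈ R ‖y‖ / 2`, hence `‖y‖`. A bounded polar forces,
by Hahn–Banach, a uniform ball `r B ⊆ K_i`.

Blaschke selection is compactness of the nonempty compact subsets of `R B` in the Hausdorff
metric, and Hausdorff limits stay convex and keep containing `r B`. For convex bodies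
`A, B ⊇ r B` at Hausdorff distance `d` one has `B ⊆ (1 + d / r) A`, hence
`|A°| ≤ (1 + d / r)ⁿ |B°|`; so the polar volume is continuous along the subsequence.
-/

open Pointwise Topology TopologicalSpace

namespace TopologicalSpace.NonemptyCompacts

variable {α : Type*} [MetricSpace α] {C : ℕ → NonemptyCompacts α} {L : NonemptyCompacts α}

theorem exists_tendsto_of_tendsto (hC : Tendsto C atTop (𝓝 L)) {x : α} (hx : x ∈ L) :
    ∃ y : ℕ → α, (∀ j, y j ∈ C j) ∧ Tendsto y atTop (𝓝 x) := by
  choose y hy hdist using fun j => (C j).isCompact.exists_infDist_eq_dist (C j).nonempty x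
  have hinf : Tendsto (fun j => infDist x (C j)) atTop (𝓝 (infDist x L)) :=
    ((lipschitz_infDist_set x).continuous.tendsto L).comp hC
  rw [infDist_zero_of_mem hx] at hinf
  refine ⟨y, hy, tendsto_iff_dist_tendsto_zero.2 ?_⟩
  simpa only [dist_comm, hdist] using hinf

theorem mem_of_tendsto (hC : Tendsto C atTop (𝓝 L)) {y : ℕ → α} {x : α} (hy : ∀ j, y j ∈ C j)
    (hyx : Tendsto y atTop (𝓝 x)) : x ∈ L := by
  have hinf := ((lipschitz_infDist (α := α)).continuous.tendsto (x, L)).comp (hyx.prodMk_nhds hC)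
  have hzero : (fun p : α × NonemptyCompacts α => infDist p.1 p.2) ∘ (fun j => (y j, C j)) =
      fun _ => 0 :=
    funext fun j => infDist_zero_of_mem (hy j)
  rw [hzero] at hinf
  exact (L.isCompact.isClosed.mem_iff_infDist_zero L.nonempty).2
    (tendsto_nhds_unique hinf tendsto_const_nhds)

theorem subset_of_tendsto (hC : Tendsto C atTop (𝓝 L)) {s : Set α} (hs : ∀ j, s ⊆ C j) :
    s ⊆ L := fun _ hx => mem_of_tendsto hC (fun j => hs j hx) tendsto_const_nhds

theorem convex_of_tendsto {F : Type*} [NormedAddCommGroup F] [NormedSpace ℝ F]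
    {C : ℕ → NonemptyCompacts F} {L : NonemptyCompacts F} (hC : Tendsto C atTop (𝓝 L))
    (hconv : ∀ j, Convex ℝ (C j : Set F)) : Convex ℝ (L : Set F) := by
  intro x hx y hy a b ha hb hab
  obtain ⟨x', hx', hx'lim⟩ := exists_tendsto_of_tendsto hC hx
  obtain ⟨y', hy', hy'lim⟩ := exists_tendsto_of_tendsto hC hy
  exact mem_of_tendsto hC (fun j => hconv j (hx' j) (hy' j) ha hb hab)
    ((hx'lim.const_smul a).add (hy'lim.const_smul b))

theorem isCompact_subsets [CompleteSpace α] {K : Set α} (hK : IsCompact K) :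
    IsCompact {C : NonemptyCompacts α | ↑C ⊆ K} :=
  (totallyBounded_subsets_of_totallyBounded hK.totallyBounded).isCompact_of_isClosed
    ((Closeds.isClosed_subsets_of_isClosed hK.isClosed).preimage continuous_toCloseds)

theorem subset_smul_of_closedBall_subset {F : Type*} [NormedAddCommGroup F]
    [NormedSpace ℝ F] (A B : NonemptyCompacts F) (hA : Convex ℝ (A : Set F))
    {r : ℝ} (hr : 0 < r) (hAr : closedBall 0 r ⊆ (A : Set F)) :
    (B : Set F) ⊆ (1 + dist A B / r) • (A : Set F) := by
  have hδ : 0 ≤ dist A B := dist_nonneg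
  calc (B : Set F) ⊆ cthickening (dist A B) A := fun x hx => by
        obtain ⟨a, ha, hxa⟩ := A.isCompact.exists_infDist_eq_dist A.nonempty x
        refine mem_cthickening_of_dist_le x a _ A ha ?_
        rw [← hxa, dist_comm A B]
        exact infDist_le_hausdorffDist_of_mem hx (edist_ne_top B A)
    _ = (A : Set F) + (dist A B / r) • closedBall 0 r := by
        rw [← A.isCompact.add_closedBall_zero hδ, _root_.smul_closedBall _ _ hr.le, smul_zero,
          Real.norm_of_nonneg (by positivity), div_mul_cancel₀ _ hr.ne']
    _ ⊆ (1 : ℝ) • (A : Set F) + (dist A B / r) • (A : Set F) := by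
        rw [one_smul]
        exact add_subset_add_left (smul_set_mono hAr)
    _ = (1 + dist A B / r) • (A : Set F) := (hA.add_smul zero_le_one (by positivity)).symm

end TopologicalSpace.NonemptyCompacts

section Polar

variable {n : ℕ} {K L : Set (E n)}

theorem polarBody_anti (h : K ⊆ L) : polarBody L ⊆ polarBody K :=
  fun _ hy x hx => hy x (h hx)

theorem convex_polarBody (K : Set (E n)) : Convex ℝ (polarBody K) := by
  intro y hy z hz a b ha hb hab x hx
  rw [inner_add_right, real_inner_smul_right, real_inner_smul_right]
  nlinarith [hy x hx, hz x hx]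

theorem closedBall_inv_subset_polarBody {R : ℝ} (hR : 0 < R) (hKR : K ⊆ closedBall 0 R) :
    closedBall 0 R⁻¹ ⊆ polarBody K := by
  intro y hy x hx
  rw [mem_closedBall_zero_iff] at hy
  have hx' := mem_closedBall_zero_iff.1 (hKR hx)
  calc inner ℝ x y ≤ ‖x‖ * ‖y‖ := real_inner_le_norm x y
    _ ≤ R * R⁻¹ := mul_le_mul hx' hy (norm_nonneg _) hR.le
    _ = 1 := mul_inv_cancel₀ hR.ne'

theorem polarBody_smul {c : ℝ} (hc : 0 < c) : polarBody (c • K) = c⁻¹ • polarBody K := by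
  ext y
  constructor
  · intro hy
    refine ⟨c • y, fun x hx => ?_, by simp [smul_smul, inv_mul_cancel₀ hc.ne']⟩
    rw [real_inner_smul_right, ← real_inner_smul_left]
    exact hy (c • x) (smul_mem_smul_set hx)
  · rintro ⟨z, hz, rfl⟩ _ ⟨x, hx, rfl⟩
    rw [real_inner_smul_right, real_inner_smul_left, ← mul_assoc, inv_mul_cancel₀ hc.ne', one_mul]
    exact hz x hx

theorem closedBall_inv_subset_of_polarBody_subset (hKconv : Convex ℝ K) (hKcl : IsClosed K)
    (h0 : (0 : E n) ∈ K) {ρ : ℝ} (hρ : 0 < ρ) (hpol : polarBody K ⊆ closedBall 0 ρ) :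
    closedBall 0 ρ⁻¹ ⊆ K := by
  intro x hx
  by_contra hxK
  obtain ⟨f, u, hfK, hfx⟩ := geometric_hahn_banach_closed_point hKconv hKcl hxK
  have hu : 0 < u := by simpa using hfK 0 h0
  set y := u⁻¹ • (InnerProductSpace.toDual ℝ (E n)).symm f
  have hinner : ∀ z, inner ℝ z y = u⁻¹ * f z := fun z => by
    rw [real_inner_smul_right, real_inner_comm, InnerProductSpace.toDual_symm_apply]
  have hy : y ∈ polarBody K := fun z hz => by
    rw [hinner, inv_mul_le_iff₀ hu, mul_one]
    exact (hfK z hz).le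
  have hxy : 1 < inner ℝ x y := by
    rwa [hinner, lt_inv_mul_iff₀ hu, mul_one]
  have hle : inner ℝ x y ≤ 1 :=
    calc inner ℝ x y ≤ ‖x‖ * ‖y‖ := real_inner_le_norm x y
      _ ≤ ρ⁻¹ * ρ := mul_le_mul (mem_closedBall_zero_iff.1 hx)
          (mem_closedBall_zero_iff.1 (hpol hy)) (norm_nonneg _) (inv_nonneg.2 hρ.le)
      _ = 1 := inv_mul_cancel₀ hρ.ne'
  linarith

end Polar

section ConvexBalls

variable {F : Type*} [NormedAddCommGroup F] [NormedSpace ℝ F] {P : Set F} {a : ℝ} {y : F}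

theorem Convex.ball_smul_subset (hP : Convex ℝ P) (hball : ball 0 a ⊆ P) (hy : y ∈ P) {t : ℝ}
    (ht0 : 0 ≤ t) (ht1 : t < 1) : ball (t • y) ((1 - t) * a) ⊆ P := by
  intro x hx
  have ht : 0 < 1 - t := sub_pos.2 ht1
  have hz : (1 - t)⁻¹ • (x - t • y) ∈ ball 0 a := by
    rw [mem_ball_zero_iff, norm_smul, Real.norm_of_nonneg (inv_nonneg.2 ht.le), inv_mul_lt_iff₀ ht,
      ← dist_eq_norm]
    exact hx
  convert hP hy (hball hz) ht0 ht.le (by ring) using 1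
  rw [smul_smul, mul_inv_cancel₀ ht.ne', one_smul, add_sub_cancel]

theorem Convex.natCast_mul_measure_ball_le [MeasurableSpace F] [BorelSpace F] (μ : Measure F)
    [μ.IsAddHaarMeasure] (hP : Convex ℝ P) (ha : 0 < a) (hball : ball 0 a ⊆ P) (hy : y ∈ P)
    {N : ℕ} (hN : 2 * N * a ≤ ‖y‖) : N * μ (ball 0 (a / 2)) ≤ μ P := by
  rcases N.eq_zero_or_pos with rfl | hNpos
  · simp
  have hy0 : 0 < ‖y‖ := by
    have : (0 : ℝ) < 2 * N * a := by positivity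
    linarith
  set c : ℕ → F := fun k => (k * a / ‖y‖) • y
  have hsub : ∀ k ∈ Finset.range N, ball (c k) (a / 2) ⊆ P := by
    intro k hk
    have hk : (k : ℝ) + 1 ≤ N := by exact_mod_cast Finset.mem_range.1 hk
    have ht : k * a / ‖y‖ ≤ 1 / 2 := by
      rw [div_le_iff₀ hy0]
      nlinarith
    refine (ball_subset_ball ?_).trans
      (hP.ball_smul_subset hball hy (by positivity) (ht.trans_lt (by norm_num)))
    nlinarith
  have hdisj : (Finset.range N : Set ℕ).PairwiseDisjoint fun k => ball (c k) (a / 2) := by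
    intro k _ l _ hkl
    refine ball_disjoint_ball ?_
    have hkl' : (1 : ℝ) ≤ |(k : ℝ) - l| := by
      exact_mod_cast Int.one_le_abs (sub_ne_zero.2 (by exact_mod_cast hkl) : (k : ℤ) - l ≠ 0)
    have : dist (c k) (c l) = |(k : ℝ) - l| * a := by
      rw [dist_eq_norm, ← sub_smul, norm_smul, Real.norm_eq_abs, ← sub_div, ← sub_mul, abs_div,
        abs_mul, abs_of_pos ha, abs_of_pos hy0, div_mul_cancel₀ _ hy0.ne']
    rw [this]
    nlinarith
  calc (N : ℝ≥0∞) * μ (ball 0 (a / 2))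
      = ∑ k ∈ Finset.range N, μ (ball (c k) (a / 2)) := by
        simp [Measure.addHaar_ball_center]
    _ = μ (⋃ k ∈ Finset.range N, ball (c k) (a / 2)) :=
        (measure_biUnion_finset hdisj fun _ _ => measurableSet_ball).symm
    _ ≤ μ P := measure_mono (iUnion₂_subset hsub)

end ConvexBalls

section Inradius

variable {n : ℕ} {K : Set (E n)} {R : ℝ}

theorem norm_lt_of_mem_polarBody (hR : 0 < R) (hKR : K ⊆ closedBall 0 R)
    (hvol : volume (polarBody K) ≤ unitBallVol n) {y : E n} (hy : y ∈ polarBody K) :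
    ‖y‖ < 2 * ((2 * R) ^ n + 1) / R := by
  set N := ⌊‖y‖ * R / 2⌋₊
  have hN : 2 * N * R⁻¹ ≤ ‖y‖ := by
    have := Nat.floor_le (a := ‖y‖ * R / 2) (by positivity)
    rw [mul_inv_le_iff₀ hR]
    linarith
  have hcount := (convex_polarBody K).natCast_mul_measure_ball_le volume (inv_pos.2 hR)
    (ball_subset_closedBall.trans (closedBall_inv_subset_polarBody hR hKR)) hy hN
  rw [Measure.addHaar_ball_of_pos _ _ (by positivity), finrank_euclideanSpace_fin,
    ← Measure.addHaar_unitClosedBall_eq_addHaar_unitBall, ← unitBallVol, ← mul_assoc] at hcount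
  have hNle : (N : ℝ) * (R⁻¹ / 2) ^ n ≤ 1 := by
    have hω0 : unitBallVol n ≠ 0 := (measure_closedBall_pos _ _ one_pos).ne'
    have hωtop : unitBallVol n ≠ ⊤ := measure_closedBall_lt_top.ne
    have := (ENNReal.mul_le_mul_iff_left hω0 hωtop).1
      ((hcount.trans hvol).trans_eq (one_mul _).symm)
    rwa [← ENNReal.ofReal_natCast, ← ENNReal.ofReal_mul (by positivity),
      ENNReal.ofReal_le_one] at this
  have hNle' : (N : ℝ) ≤ (2 * R) ^ n := by
    rwa [← le_div_iff₀ (by positivity), one_div, ← inv_pow, inv_div, div_inv_eq_mul] at hNle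
  have hlt : ‖y‖ * R / 2 < N + 1 := Nat.lt_floor_add_one _
  rw [lt_div_iff₀ hR]
  linarith

theorem closedBall_subset_of_volume_polarBody_le (hK : IsBody K) (hR : 0 < R)
    (hKR : K ⊆ closedBall 0 R) (hvol : volume (polarBody K) ≤ unitBallVol n) :
    closedBall 0 (R / (2 * ((2 * R) ^ n + 1))) ⊆ K := by
  rw [← inv_div]
  exact closedBall_inv_subset_of_polarBody_subset hK.2.1 hK.1.isClosed (interior_subset hK.2.2)
    (by positivity) fun y hy =>
      mem_closedBall_zero_iff.2 (norm_lt_of_mem_polarBody hR hKR hvol hy).le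

end Inradius

section HausdorffContinuity

variable {n : ℕ}

theorem volume_polarBody_le_of_subset_smul {A B : Set (E n)} {c : ℝ} (hc : 0 < c)
    (h : B ⊆ c • A) : volume (polarBody A) ≤ ENNReal.ofReal (c ^ n) * volume (polarBody B) := by
  have hsub : c⁻¹ • polarBody A ⊆ polarBody B := polarBody_smul hc ▸ polarBody_anti h
  calc volume (polarBody A)
      = ENNReal.ofReal (c ^ n) * volume (c⁻¹ • polarBody A) := by
        rw [Measure.addHaar_smul, finrank_euclideanSpace_fin, ← mul_assoc,
          ← ENNReal.ofReal_mul (by positivity), abs_of_pos (by positivity), ← mul_pow,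
          mul_inv_cancel₀ hc.ne', one_pow, ENNReal.ofReal_one, one_mul]
    _ ≤ ENNReal.ofReal (c ^ n) * volume (polarBody B) := by gcongr

theorem tendsto_volume_polarBody {C : ℕ → NonemptyCompacts (E n)} {L : NonemptyCompacts (E n)}
    (hC : Tendsto C atTop (𝓝 L)) (hCconv : ∀ j, Convex ℝ (C j : Set (E n)))
    (hLconv : Convex ℝ (L : Set (E n))) {r : ℝ} (hr : 0 < r)
    (hCr : ∀ j, closedBall 0 r ⊆ (C j : Set (E n))) (hLr : closedBall 0 r ⊆ (L : Set (E n))) :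
    Tendsto (fun j => volume (polarBody (C j : Set (E n)))) atTop
      (𝓝 (volume (polarBody (L : Set (E n))))) := by
  set c : ℕ → ℝ≥0∞ := fun j => ENNReal.ofReal ((1 + dist (C j) L / r) ^ n)
  have hc : Tendsto c atTop (𝓝 1) := by
    have hd : Tendsto (fun j => dist (C j) L) atTop (𝓝 0) := tendsto_iff_dist_tendsto_zero.1 hC
    simpa using ENNReal.tendsto_ofReal (((hd.div_const r).const_add 1).pow n)
  have hupper (j : ℕ) :
      volume (polarBody (C j : Set (E n))) ≤ c j * volume (polarBody (L : Set (E n))) :=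
    volume_polarBody_le_of_subset_smul (by positivity)
      ((C j).subset_smul_of_closedBall_subset L (hCconv j) hr (hCr j))
  have hlower (j : ℕ) :
      (c j)⁻¹ * volume (polarBody (L : Set (E n))) ≤ volume (polarBody (C j : Set (E n))) := by
    have := volume_polarBody_le_of_subset_smul (by positivity)
      (L.subset_smul_of_closedBall_subset (C j) hLconv hr hLr)
    rw [dist_comm] at this
    exact (ENNReal.inv_mul_le_iff (by positivity) ENNReal.ofReal_ne_top).2 this
  refine tendsto_of_tendsto_of_tendsto_of_le_of_le ?_ ?_ hlower hupper
  · simpa using ENNReal.Tendsto.mul_const hc.inv (Or.inl (by simp))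
  · simpa using ENNReal.Tendsto.mul_const hc (Or.inl one_ne_zero)

end HausdorffContinuity

theorem blaschke_selection_polar_volume {n : ℕ}
    (K : ℕ → Set (E n)) (hK : ∀ i, IsBody (K i))
    (hbd : ∃ R : ℝ, ∀ i, K i ⊆ Metric.closedBall (0 : E n) R)
    (hvol : ∀ i, volume (polarBody (K i)) = unitBallVol n) :
    ∃ (φ : ℕ → ℕ) (Kl : Set (E n)), StrictMono φ ∧ IsBody Kl ∧
      Tendsto (fun j => hausdorffDist (K (φ j)) Kl) atTop (nhds 0) ∧
      volume (polarBody Kl) = unitBallVol n := by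
  obtain ⟨R₀, hR₀⟩ := hbd
  set R := max R₀ 1
  have hKR : ∀ i, K i ⊆ closedBall 0 R := fun i =>
    (hR₀ i).trans (closedBall_subset_closedBall (le_max_left _ _))
  have hR : 0 < R := lt_max_of_lt_right one_pos
  set r := R / (2 * ((2 * R) ^ n + 1))
  have hr : 0 < r := by positivity
  have hball : ∀ i, closedBall 0 r ⊆ K i := fun i =>
    closedBall_subset_of_volume_polarBody_le (hK i) hR (hKR i) (hvol i).le
  let C : ℕ → NonemptyCompacts (E n) := fun i => ⟨⟨K i, (hK i).1⟩, ⟨0, interior_subset (hK i).2.2⟩⟩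
  obtain ⟨L, -, φ, hφ, hlim⟩ :=
    (NonemptyCompacts.isCompact_subsets (isCompact_closedBall (0 : E n) R)).tendsto_subseq
      (x := C) hKR
  have hLconv : Convex ℝ (L : Set (E n)) :=
    NonemptyCompacts.convex_of_tendsto hlim fun j => (hK (φ j)).2.1
  have hLr : closedBall 0 r ⊆ (L : Set (E n)) :=
    NonemptyCompacts.subset_of_tendsto hlim fun j => hball (φ j)
  refine ⟨φ, L, hφ, ⟨L.isCompact, hLconv, ?_⟩, tendsto_iff_dist_tendsto_zero.1 hlim, ?_⟩
  · exact interior_mono hLr (mem_interior_iff_mem_nhds.2 (closedBall_mem_nhds _ hr))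
  · refine tendsto_nhds_unique
      (tendsto_volume_polarBody hlim (fun j => (hK (φ j)).2.1) hLconv hr (fun j => hball (φ j)) hLr)
      (tendsto_const_nhds.congr fun j => (hvol (φ j)).symm)
end
end
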